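/- Let L ⊆ H with H = kL. Then W_H(R) = W_L(R) for any H-module algebra R. -/

import Mathlib

open scoped TensorProduct

class HModAlg (k H R : Type*) [CommRing k] [Ring H] [Algebra k H]
    [Coalgebra k H] [NonUnitalRing R] [Module k R]
    [SMulCommClass k R R] [IsScalarTower k R R] where
  hsmul : H →ₗ[k] R →ₗ[k] R
  one_hsmul : ∀ r : R, hsmul 1 r = r
  mul_hsmul : ∀ (h h' : H) (r : R), hsmul (h * h') r = hsmul h (hsmul h' r)
  hsmul_mul : ∀ (h : H) (a b : R),
    hsmul h (a * b) =
      LinearMap.mul' k R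
        (TensorProduct.map (hsmul.flip a) (hsmul.flip b) (Coalgebra.comul h))

/-- product f 0 * f 1 * ⋯ * f n -/
def prodSeq {R : Type*} [Mul R] (f : ℕ → R) : ℕ → R
  | 0 => f 0
  | n + 1 => prodSeq f n * f (n + 1)

/-- `I` is a nilpotent subset: some power of it vanishes. -/
def IsNilpotentSet {R : Type*} [Mul R] [Zero R] (I : Set R) : Prop :=
  ∃ n : ℕ, ∀ f : ℕ → R, (∀ i, f i ∈ I) → prodSeq f n = 0

/-- `I` is nilpotent modulo `J`. -/
def IsNilpotentSetMod {R : Type*} [Mul R] (I J : Set R) : Prop :=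
  ∃ n : ℕ, ∀ f : ℕ → R, (∀ i, f i ∈ I) → prodSeq f n ∈ J

section Defs

variable (k H : Type*) {R : Type*} [CommRing k] [Ring H] [Algebra k H]
  [Coalgebra k H] [NonUnitalRing R] [Module k R]
  [SMulCommClass k R R] [IsScalarTower k R R] [HModAlg k H R]

/-- The action of `h : H` on `r : R`. -/
def hact (h : H) (r : R) : R := HModAlg.hsmul (k := k) h r

/-- `I` is an `H`-ideal of the `H`-module (sub)algebra `B ⊆ R`. -/
structure IsHIdealIn (B I : Set R) : Prop where
  subset : I ⊆ B
  zero_mem : (0 : R) ∈ I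
  add_mem : ∀ {x y : R}, x ∈ I → y ∈ I → x + y ∈ I
  neg_mem : ∀ {x : R}, x ∈ I → -x ∈ I
  mul_mem_left : ∀ {x : R}, x ∈ B → ∀ {y : R}, y ∈ I → x * y ∈ I
  mul_mem_right : ∀ {x : R}, x ∈ I → ∀ {y : R}, y ∈ B → x * y ∈ I
  hsmul_mem : ∀ (h : H) {x : R}, x ∈ I → hact k H h x ∈ I

/-- `I` is an `H`-ideal of `R`. -/
def IsHIdeal (I : Set R) : Prop := IsHIdealIn k H Set.univ I

/-- `R` is `H`-semiprime. -/
def IsHSemiprime : Prop :=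
  ∀ I : Set R, IsHIdeal k H I → IsNilpotentSet I → I = {0}

/-- The subalgebra `B` of `R` is `H`-semiprime. -/
def IsHSemiprimeIn (B : Set R) : Prop :=
  ∀ I : Set R, IsHIdealIn k H B I → IsNilpotentSet I → I = {0}

/-- `R` is `H`-prime. -/
def IsHPrime : Prop :=
  ∀ I J : Set R, IsHIdeal k H I → IsHIdeal k H J →
    (∀ a ∈ I, ∀ b ∈ J, a * b = 0) → I = {0} ∨ J = {0}

/-- The `H`-ideal of `R` generated by `E`. -/
def genHIdeal (E : Set R) : Set R := ⋂₀ {I : Set R | IsHIdeal k H I ∧ E ⊆ I}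

end Defs

/-- The set `W_L(R)` of `L`-`m`-nilpotent elements. -/
def WLset (k H : Type*) {R : Type*} [CommRing k] [Ring H] [Algebra k H]
    [Coalgebra k H] [NonUnitalRing R] [Module k R] [SMulCommClass k R R]
    [IsScalarTower k R R] [HModAlg k H R] (L : Set H) : Set R :=
  {a : R | ∀ (s b : ℕ → R) (h h' : ℕ → H), (∀ n, h n ∈ L) → (∀ n, h' n ∈ L) →
    s 0 = a →
    (∀ n, s (n + 1) = hact k H (h n) (s n) * b n * hact k H (h' n) (s n)) →
    ∃ n, s n = 0}

/-! The inclusion `W_H(R) ⊆ W_L(R)` is trivial. Conversely, if an `H`-m-sequence `s` starting at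
`a` never vanishes, Zorn gives an `H`-ideal `P` maximal among those missing every `s n`.
Maximality makes the complement of `P` an `H`-m-system: if every `(g • c) b (g' • c)` lay in `P`
for some `c ∉ P`, there would be an `H`-ideal `J ⊇ P ∪ {c}` with `J R J ⊆ P`; by maximality `J`
contains some `s m`, which puts `s (m + 1)` in `P`. As `(g, g') ↦ (g • c) b (g' • c)` is
bilinear once scalars are moved into `b`, and `L` spans `H`, the complement is even an
`L`-m-system, hence contains an `L`-m-sequence from `a`; it never reaches `0 ∈ P`. -/

section HAction

variable {k H R : Type*} [CommRing k] [Ring H] [Algebra k H] [Coalgebra k H]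
  [NonUnitalRing R] [Module k R] [SMulCommClass k R R] [IsScalarTower k R R]
  [HModAlg k H R]

lemma hact_zero (g : H) : hact k H g (0 : R) = 0 := map_zero _

lemma hact_add (g : H) (x y : R) : hact k H g (x + y) = hact k H g x + hact k H g y :=
  map_add _ _ _

lemma hact_neg (g : H) (x : R) : hact k H g (-x) = -hact k H g x := map_neg _ _

lemma hact_one (x : R) : hact k H 1 x = x := HModAlg.one_hsmul x

lemma zero_hact (x : R) : hact k H 0 x = 0 := by
  simp only [hact, map_zero, LinearMap.zero_apply]

lemma add_hact (g g' : H) (x : R) : hact k H (g + g') x = hact k H g x + hact k H g' x := by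
  simp only [hact, map_add, LinearMap.add_apply]

lemma smul_hact (a : k) (g : H) (x : R) : hact k H (a • g) x = a • hact k H g x := by
  simp only [hact, map_smul, LinearMap.smul_apply]

lemma hact_hact (g h : H) (x : R) : hact k H g (hact k H h x) = hact k H (g * h) x :=
  (HModAlg.mul_hsmul g h x).symm

/-- `g • (x * y) = ∑ (g₁ • x) * (g₂ • y)` over `Δ g = ∑ g₁ ⊗ g₂`. -/
lemma hact_mul_induction (g : H) (x y : R) {Q : R → Prop} (zero : Q 0)
    (add : ∀ a b, Q a → Q b → Q (a + b))
    (mul : ∀ g₁ g₂ : H, Q (hact k H g₁ x * hact k H g₂ y)) :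
    Q (hact k H g (x * y)) := by
  rw [hact, HModAlg.hsmul_mul]
  induction (Coalgebra.comul g : H ⊗[k] H) using TensorProduct.induction_on with
  | zero => simpa using zero
  | tmul g₁ g₂ => exact mul g₁ g₂
  | add z w hz hw => simpa only [map_add] using add _ _ hz hw

end HAction

section HIdeal

variable {k H R : Type*} [CommRing k] [Ring H] [Algebra k H] [Coalgebra k H]
  [NonUnitalRing R] [Module k R] [SMulCommClass k R R] [IsScalarTower k R R]
  [HModAlg k H R]

lemma isHIdeal_singleton_zero : IsHIdeal k H ({0} : Set R) where
  subset := Set.subset_univ _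
  zero_mem := rfl
  add_mem hx hy := by simp_all
  neg_mem hx := by simp_all
  mul_mem_left _ _ hy := by simp_all
  mul_mem_right hx _ _ := by simp_all
  hsmul_mem g _ hx := by simp_all [hact_zero]

lemma IsHIdeal.inter {I J : Set R} (hI : IsHIdeal k H I) (hJ : IsHIdeal k H J) :
    IsHIdeal k H (I ∩ J) where
  subset := Set.subset_univ _
  zero_mem := ⟨hI.zero_mem, hJ.zero_mem⟩
  add_mem hx hy := ⟨hI.add_mem hx.1 hy.1, hJ.add_mem hx.2 hy.2⟩
  neg_mem hx := ⟨hI.neg_mem hx.1, hJ.neg_mem hx.2⟩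
  mul_mem_left hx _ hy := ⟨hI.mul_mem_left hx hy.1, hJ.mul_mem_left hx hy.2⟩
  mul_mem_right hx _ hy := ⟨hI.mul_mem_right hx.1 hy, hJ.mul_mem_right hx.2 hy⟩
  hsmul_mem g _ hx := ⟨hI.hsmul_mem g hx.1, hJ.hsmul_mem g hx.2⟩

lemma isHIdeal_sUnion_of_isChain {C : Set (Set R)} (hC : ∀ I ∈ C, IsHIdeal k H I)
    (hchain : IsChain (· ⊆ ·) C) (hne : C.Nonempty) : IsHIdeal k H (⋃₀ C) where
  subset := Set.subset_univ _
  zero_mem := hne.elim fun I hI => ⟨I, hI, (hC I hI).zero_mem⟩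
  add_mem := by
    rintro x y ⟨I, hI, hx⟩ ⟨J, hJ, hy⟩
    rcases hchain.total hI hJ with hIJ | hJI
    · exact ⟨J, hJ, (hC J hJ).add_mem (hIJ hx) hy⟩
    · exact ⟨I, hI, (hC I hI).add_mem hx (hJI hy)⟩
  neg_mem := fun ⟨I, hI, hx⟩ => ⟨I, hI, (hC I hI).neg_mem hx⟩
  mul_mem_left hx _ := fun ⟨I, hI, hy⟩ => ⟨I, hI, (hC I hI).mul_mem_left hx hy⟩
  mul_mem_right := fun ⟨I, hI, hx⟩ _ hy => ⟨I, hI, (hC I hI).mul_mem_right hx hy⟩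
  hsmul_mem g _ := fun ⟨I, hI, hx⟩ => ⟨I, hI, (hC I hI).hsmul_mem g hx⟩

lemma exists_maximal_isHIdeal_disjoint {T : Set R} (hT : (0 : R) ∉ T) :
    ∃ P, Maximal (fun I => IsHIdeal k H I ∧ Disjoint I T) P := by
  obtain ⟨P, -, hP⟩ := zorn_subset_nonempty {I | IsHIdeal k H I ∧ Disjoint I T}
    (fun C hC hchain hne => ⟨⋃₀ C,
      ⟨isHIdeal_sUnion_of_isChain (fun I hI => (hC hI).1) hchain hne,
        Set.disjoint_sUnion_left.2 fun I hI => (hC hI).2⟩,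
      fun _ => Set.subset_sUnion_of_mem⟩)
    {0} ⟨isHIdeal_singleton_zero, Set.disjoint_singleton_left.2 hT⟩
  exact ⟨P, hP⟩

lemma isHIdeal_setOf_mul_hact_mem {P : Set R} (hP : IsHIdeal k H P) (U : Set R) :
    IsHIdeal k H {x : R | ∀ (g : H), ∀ u ∈ U, ∀ b : R, u * b * hact k H g x ∈ P} where
  subset := Set.subset_univ _
  zero_mem g u _ b := by simpa only [hact_zero, mul_zero] using hP.zero_mem
  add_mem hx hy g u hu b := by
    simpa only [hact_add, mul_add] using hP.add_mem (hx g u hu b) (hy g u hu b)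
  neg_mem hx g u hu b := by simpa only [hact_neg, mul_neg] using hP.neg_mem (hx g u hu b)
  mul_mem_left := by
    intro x _ y hy g u hu b
    refine hact_mul_induction g x y (Q := fun z => u * b * z ∈ P)
      (by simpa only [mul_zero] using hP.zero_mem)
      (fun z w hz hw => by simpa only [mul_add] using hP.add_mem hz hw) fun g₁ g₂ => ?_
    simpa only [mul_assoc] using hy g₂ u hu (b * hact k H g₁ x)
  mul_mem_right := by
    intro x hx y _ g u hu b
    refine hact_mul_induction g x y (Q := fun z => u * b * z ∈ P)
      (by simpa only [mul_zero] using hP.zero_mem)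
      (fun z w hz hw => by simpa only [mul_add] using hP.add_mem hz hw) fun g₁ g₂ => ?_
    simpa only [mul_assoc] using hP.mul_mem_right (hx g₁ u hu b) (Set.mem_univ (hact k H g₂ y))
  hsmul_mem h x hx g u hu b := by simpa only [hact_hact] using hx (g * h) u hu b

lemma isHIdeal_setOf_hact_mul_mem {P : Set R} (hP : IsHIdeal k H P) (U : Set R) :
    IsHIdeal k H {x : R | ∀ (g : H), ∀ u ∈ U, ∀ b : R, hact k H g x * b * u ∈ P} where
  subset := Set.subset_univ _
  zero_mem g u _ b := by simpa only [hact_zero, zero_mul] using hP.zero_mem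
  add_mem hx hy g u hu b := by
    simpa only [hact_add, add_mul] using hP.add_mem (hx g u hu b) (hy g u hu b)
  neg_mem hx g u hu b := by
    simpa only [hact_neg, neg_mul] using hP.neg_mem (hx g u hu b)
  mul_mem_left := by
    intro x _ y hy g u hu b
    refine hact_mul_induction g x y (Q := fun z => z * b * u ∈ P)
      (by simpa only [zero_mul] using hP.zero_mem)
      (fun z w hz hw => by simpa only [add_mul] using hP.add_mem hz hw) fun g₁ g₂ => ?_
    simpa only [mul_assoc] using hP.mul_mem_left (Set.mem_univ (hact k H g₁ x)) (hy g₂ u hu b)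
  mul_mem_right := by
    intro x hx y _ g u hu b
    refine hact_mul_induction g x y (Q := fun z => z * b * u ∈ P)
      (by simpa only [zero_mul] using hP.zero_mem)
      (fun z w hz hw => by simpa only [add_mul] using hP.add_mem hz hw) fun g₁ g₂ => ?_
    simpa only [mul_assoc] using hx g₁ u hu (hact k H g₂ y * b)
  hsmul_mem h x hx g u hu b := by simpa only [hact_hact] using hx (g * h) u hu b

lemma exists_isHIdeal_mul_mem_of_hact_mul_hact_mem {P : Set R} (hP : IsHIdeal k H P) {c : R}
    (hc : ∀ (g g' : H) (b : R), hact k H g c * b * hact k H g' c ∈ P) :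
    ∃ J, IsHIdeal k H J ∧ P ⊆ J ∧ c ∈ J ∧ ∀ x ∈ J, ∀ y ∈ J, ∀ b, x * b * y ∈ P := by
  set K₁ := {x : R | ∀ (g : H), ∀ u ∈ Set.range (hact k H · c), ∀ b : R,
    u * b * hact k H g x ∈ P}
  set K₂ := {x : R | ∀ (g : H), ∀ u ∈ K₁, ∀ b : R, hact k H g x * b * u ∈ P}
  refine ⟨K₂ ∩ K₁, (isHIdeal_setOf_hact_mul_mem hP K₁).inter (isHIdeal_setOf_mul_hact_mem hP _),
    fun p hp => ⟨?_, ?_⟩, ⟨?_, ?_⟩, fun x hx y hy b => ?_⟩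
  · exact fun g u _ b => hP.mul_mem_right (hP.mul_mem_right (hP.hsmul_mem g hp) trivial) trivial
  · exact fun g u _ b => hP.mul_mem_left trivial (hP.hsmul_mem g hp)
  · intro g u hu b
    simpa only [hact_one] using hu 1 _ ⟨g, rfl⟩ b
  · rintro g _ ⟨g', rfl⟩ b
    exact hc g' g b
  · simpa only [hact_one] using hx.1 1 y hy.2 b

lemma hact_mul_hact_mem_of_span_eq_top {L : Set H} (hL : Submodule.span k L = ⊤)
    {P : Set R} (hP : IsHIdeal k H P) {c : R}
    (hc : ∀ l ∈ L, ∀ l' ∈ L, ∀ b : R, hact k H l c * b * hact k H l' c ∈ P)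
    (g g' : H) (b : R) : hact k H g c * b * hact k H g' c ∈ P := by
  have hg : g ∈ Submodule.span k L := hL ▸ trivial
  have hg' : g' ∈ Submodule.span k L := hL ▸ trivial
  induction hg, hg' using Submodule.span_induction₂ generalizing b with
  | mem_mem l l' hl hl' => exact hc l hl l' hl' b
  | zero_left => simpa only [zero_hact, zero_mul] using hP.zero_mem
  | zero_right => simpa only [zero_hact, mul_zero] using hP.zero_mem
  | add_left _ _ _ _ _ _ h₁ h₂ =>
    simpa only [add_hact, add_mul] using hP.add_mem (h₁ b) (h₂ b)
  | add_right _ _ _ _ _ _ h₁ h₂ =>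
    simpa only [add_hact, mul_add] using hP.add_mem (h₁ b) (h₂ b)
  | smul_left a _ _ _ _ h => simpa only [smul_hact, smul_mul_assoc, mul_smul_comm] using h (a • b)
  | smul_right a _ _ _ _ h => simpa only [smul_hact, smul_mul_assoc, mul_smul_comm] using h (a • b)

end HIdeal

section MSystem

variable (k H) {R : Type*} [CommRing k] [Ring H] [Algebra k H] [Coalgebra k H]
  [NonUnitalRing R] [Module k R] [SMulCommClass k R R] [IsScalarTower k R R]
  [HModAlg k H R]

def IsMSystem (L : Set H) (S : Set R) : Prop :=
  ∀ c ∈ S, ∃ l ∈ L, ∃ l' ∈ L, ∃ b : R, hact k H l c * b * hact k H l' c ∈ S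

variable {k H}

lemma WLset_anti {L L' : Set H} (hLL' : L ⊆ L') : WLset k H (R := R) L' ⊆ WLset k H L :=
  fun _ ha s b h h' hh hh' => ha s b h h' (fun n => hLL' (hh n)) (fun n => hLL' (hh' n))

lemma IsMSystem.notMem_WLset {L : Set H} {S : Set R} (hS : IsMSystem k H L S) (h0 : (0 : R) ∉ S)
    {a : R} (ha : a ∈ S) : a ∉ WLset k H L := by
  intro hW
  choose l hl l' hl' b hb using fun c : S => hS c c.2
  let next : S → S := fun c => ⟨_, hb c⟩
  let t : ℕ → S := fun n => next^[n] ⟨a, ha⟩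
  obtain ⟨n, hn⟩ := hW (fun n => t n) (fun n => b (t n)) (fun n => l (t n)) (fun n => l' (t n))
    (fun n => hl _) (fun n => hl' _) rfl
    (fun n => by simp only [t, Function.iterate_succ_apply']; rfl)
  exact h0 (hn ▸ (t n).2)

lemma IsMSystem.compl_of_span_eq_top {L : Set H} (hL : Submodule.span k L = ⊤) {P : Set R}
    (hP : IsHIdeal k H P) (hPc : IsMSystem k H Set.univ Pᶜ) : IsMSystem k H L Pᶜ := by
  intro c hc
  by_contra! hcP
  obtain ⟨g, -, g', -, b, hb⟩ := hPc c hc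
  exact hb (hact_mul_hact_mem_of_span_eq_top hL hP (by simpa using hcP) g g' b)

lemma isMSystem_compl_of_maximal_disjoint {s b : ℕ → R} {h h' : ℕ → H}
    (hs : ∀ n, s (n + 1) = hact k H (h n) (s n) * b n * hact k H (h' n) (s n)) {P : Set R}
    (hP : Maximal (fun I => IsHIdeal k H I ∧ Disjoint I (Set.range s)) P) :
    IsMSystem k H Set.univ Pᶜ := by
  intro c hc
  by_contra! hcP
  obtain ⟨J, hJ, hPJ, hcJ, hJJ⟩ :=
    exists_isHIdeal_mul_mem_of_hact_mul_hact_mem hP.1.1 (by simpa using hcP)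
  obtain ⟨_, hmJ, m, rfl⟩ := Set.not_disjoint_iff.1 fun hJs => hc (hP.2 ⟨hJ, hJs⟩ hPJ hcJ)
  refine Set.disjoint_left.1 hP.1.2 ?_ ⟨m + 1, rfl⟩
  rw [hs m]
  exact hJJ _ (hJ.hsmul_mem _ hmJ) _ (hJ.hsmul_mem _ hmJ) _

end MSystem

/-- if `L` spans `H` over `k`, then `W_H(R) = W_L(R)`. -/
theorem stmt13 {k H R : Type*} [CommRing k] [Ring H] [Algebra k H] [Coalgebra k H]
    [NonUnitalRing R] [Module k R] [SMulCommClass k R R] [IsScalarTower k R R]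
    [HModAlg k H R] (L : Set H)
    (hL : Submodule.span k L = ⊤) :
    WLset k H (R := R) Set.univ = WLset k H (R := R) L := by
  refine (WLset_anti (Set.subset_univ L)).antisymm fun a ha => ?_
  intro s b h h' _ _ hs0 hs
  by_contra! hne
  obtain ⟨P, hP⟩ := exists_maximal_isHIdeal_disjoint (k := k) (H := H)
    (T := Set.range s) fun ⟨n, hn⟩ => hne n hn
  have haP : a ∉ P := fun haP => Set.disjoint_left.1 hP.1.2 haP ⟨0, hs0⟩
  exact ((isMSystem_compl_of_maximal_disjoint hs hP).compl_of_span_eq_top hL hP.1.1).notMem_WLset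
    (fun h0 => h0 hP.1.1.zero_mem) haP ha
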